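/- Let A ∈ ℝ^{m×N} with rank(A) = m, y ∈ ℝ^m, p ≥ 2 and α > 0. Then ‖q*‖_∞ ≤ ‖m*‖₁ ≤ (√N/σ_min(A))‖y‖₂. -/

import Mathlib

noncomputable section

/-- The Euclidean (ℓ²) norm of a vector in ℝⁿ. -/
def norm2 {n : ℕ} (v : Fin n → ℝ) : ℝ := Real.sqrt (∑ i, v i ^ 2)

/-- The ℓ¹ norm of a vector in ℝⁿ. -/
def norm1 {n : ℕ} (v : Fin n → ℝ) : ℝ := ∑ i, |v i|

/-- The sup (ℓ^∞) norm of a vector in ℝⁿ. -/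
def normInf {n : ℕ} (v : Fin n → ℝ) : ℝ := ⨆ i, |v i|

/-- The ℓʳ (quasi-)norm ‖v‖_r = (∑ |v i|^r)^(1/r). -/
def normr {n : ℕ} (r : ℝ) (v : Fin n → ℝ) : ℝ := (∑ i, |v i| ^ r) ^ (1 / r)

/-- The smallest singular value of `A`, via `σ_min(A) = inf {‖Aᵀ z‖₂ : ‖z‖₂ = 1}`. -/
def sigmaMin {m N : ℕ} (A : Matrix (Fin m) (Fin N) ℝ) : ℝ :=
  sInf {c : ℝ | ∃ z : Fin m → ℝ, norm2 z = 1 ∧ c = norm2 (A.transpose.mulVec z)}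

/-- The entropy H(z) = −∑ |z i| ln |z i| (with the convention 0 · ln 0 = 0,
which holds automatically since `Real.log 0 = 0`). -/
def Hent {n : ℕ} (z : Fin n → ℝ) : ℝ := -∑ i, |z i| * Real.log |z i|

/-- The set 𝒰(A,y) of basis-pursuit minimizers: minimizers of ‖·‖₁ subject to Az = y. -/
def BPset {m N : ℕ} (A : Matrix (Fin m) (Fin N) ℝ) (y : Fin m → ℝ) : Set (Fin N → ℝ) :=
  {z | A.mulVec z = y ∧ ∀ w : Fin N → ℝ, A.mulVec w = y → norm1 z ≤ norm1 w}

/-- The basis-pursuit minimum value R(A,y) = min {‖z‖₁ : Az = y}. -/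
def Rmin {m N : ℕ} (A : Matrix (Fin m) (Fin N) ℝ) (y : Fin m → ℝ) : ℝ :=
  sInf (norm1 '' {z : Fin N → ℝ | A.mulVec z = y})

/-- The function h_p: h₂(t) = 2 sinh t, and for p > 2,
h_p(t) = (1−t)^{−p/(p−2)} − (1+t)^{−p/(p−2)}. -/
def hfun (p t : ℝ) : ℝ :=
  if p = 2 then 2 * Real.sinh t
  else (1 - t) ^ (-(p / (p - 2))) - (1 + t) ^ (-(p / (p - 2)))

/-- The natural domain of h_p: all of ℝ when p = 2, and (−1,1) when p > 2. -/
def hDomain (p : ℝ) : Set ℝ := if p = 2 then Set.univ else Set.Ioo (-1) 1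

/-- The inverse h_p^{-1} : ℝ → ℝ of h_p (h_p is a strictly increasing bijection
from its domain onto ℝ). -/
def hInv (p u : ℝ) : ℝ := Function.invFunOn (hfun p) (hDomain p) u

/-- q_p(u) = ∫₀ᵘ h_p^{−1}(v) dv. -/
def qfun (p u : ℝ) : ℝ := ∫ v in (0:ℝ)..u, hInv p v

/-- Q_p(z) = α^p ∑ q_p(z i / α^p). -/
def Qfun {n : ℕ} (p α : ℝ) (z : Fin n → ℝ) : ℝ := α ^ p * ∑ i, qfun p (z i / α ^ p)

/-- g_p: g₂(u) = |u| ln(|u|/e) (with g₂(0) = 0), and for p > 2,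
g_p(u) = |u| − (p/2)|u|^{2/p}. -/
def gfun (p u : ℝ) : ℝ :=
  if p = 2 then (if u = 0 then 0 else |u| * Real.log (|u| / Real.exp 1))
  else |u| - p / 2 * |u| ^ (2 / p)

/-- G_p(z) = α^p ∑ g_p(z i / α^p). -/
def Gfun {n : ℕ} (p α : ℝ) (z : Fin n → ℝ) : ℝ := α ^ p * ∑ i, gfun p (z i / α ^ p)

/-- The predictor ψ_θ = θ₊^p − θ₋^p (componentwise powers), for a parameter vector
θ = (θ₊, θ₋) ∈ ℝ^{2N}. -/
def psiOf {N : ℕ} (p : ℝ) (θ : EuclideanSpace ℝ (Fin N ⊕ Fin N)) : Fin N → ℝ :=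
  fun i => θ (Sum.inl i) ^ p - θ (Sum.inr i) ^ p

/-- The squared loss L(θ) = (1/2)‖A ψ_θ − y‖₂². -/
def lossFun {m N : ℕ} (A : Matrix (Fin m) (Fin N) ℝ) (y : Fin m → ℝ) (p : ℝ)
    (θ : EuclideanSpace ℝ (Fin N ⊕ Fin N)) : ℝ :=
  (1 / 2) * ∑ j, (A.mulVec (psiOf p θ) j - y j) ^ 2

end

/-!
Since `m*` is feasible, `Q_p(q*) ≤ Q_p(m*)`. As `h_p⁻¹` is odd and strictly increasing, `q_p` is
even and, being the primitive of an increasing function vanishing at `0`, nonnegative, strictly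
increasing and superadditive on `[0, ∞)`. With `β = α^p` this gives
`q_p(|q*ᵢ|/β) ≤ ∑ q_p(q*ⱼ/β) ≤ ∑ q_p(|m*ⱼ|/β) ≤ q_p(‖m*‖₁/β)`, hence `|q*ᵢ| ≤ ‖m*‖₁`.

For the second bound, compare `m*` with the least-norm solution `z = Aᵀw`, `AAᵀw = y`:
`‖z‖₂² = ⟨w, y⟩ ≤ ‖w‖₂‖y‖₂ ≤ ‖z‖₂‖y‖₂ / σ_min(A)`, and `‖m*‖₁ ≤ ‖z‖₁ ≤ √N ‖z‖₂`.
-/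

open Set
open scoped Matrix

lemma hfun_neg (p t : ℝ) : hfun p (-t) = -hfun p t := by
  unfold hfun
  split_ifs
  · rw [Real.sinh_neg]; ring
  · ring_nf

lemma hfun_zero (p : ℝ) : hfun p 0 = 0 := by
  unfold hfun; split_ifs <;> simp

lemma zero_mem_hDomain (p : ℝ) : (0 : ℝ) ∈ hDomain p := by
  unfold hDomain; split_ifs <;> simp

lemma neg_mem_hDomain {p t : ℝ} (ht : t ∈ hDomain p) : -t ∈ hDomain p := by
  unfold hDomain at *
  split_ifs at *
  · trivial
  · exact ⟨by linarith [ht.2], by linarith [ht.1]⟩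

instance hDomain_ordConnected (p : ℝ) : (hDomain p).OrdConnected := by
  unfold hDomain; split_ifs <;> infer_instance

lemma hfun_continuousOn (p : ℝ) : ContinuousOn (hfun p) (hDomain p) := by
  unfold hfun hDomain
  split_ifs
  · fun_prop
  · refine ContinuousOn.sub (fun t ht => ?_) (fun t ht => ?_) <;>
      refine ContinuousAt.continuousWithinAt (ContinuousAt.rpow_const (by fun_prop) (Or.inl ?_))
    · linarith [ht.2]
    · linarith [ht.1]

lemma hfun_strictMonoOn {p : ℝ} (hp : 2 ≤ p) : StrictMonoOn (hfun p) (hDomain p) := by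
  unfold hfun hDomain
  split_ifs with hp2
  · exact fun a _ b _ hab => by simpa using Real.sinh_lt_sinh.mpr hab
  · have he : -(p / (p - 2)) < 0 :=
      neg_neg_of_pos (div_pos (by linarith) (by linarith [lt_of_le_of_ne hp (Ne.symm hp2)]))
    intro a ha b hb hab
    have hleft := Real.rpow_lt_rpow_of_neg (by linarith [hb.2] : 0 < 1 - b)
      (by linarith : 1 - b < 1 - a) he
    have hright := Real.rpow_lt_rpow_of_neg (by linarith [ha.1] : 0 < 1 + a)
      (by linarith : 1 + a < 1 + b) he
    linarith

lemma exists_le_hfun {p : ℝ} (hp : 2 ≤ p) {v : ℝ} (hv : 0 ≤ v) :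
    ∃ t ∈ hDomain p, 0 ≤ t ∧ v ≤ hfun p t := by
  unfold hfun hDomain
  split_ifs with hp2
  · exact ⟨v, trivial, hv, by linarith [Real.self_le_sinh_iff.mpr hv]⟩
  · set e := -(p / (p - 2))
    have he : e < 0 :=
      neg_neg_of_pos (div_pos (by linarith) (by linarith [lt_of_le_of_ne hp (Ne.symm hp2)]))
    -- `t = 1 - x` with `(1 - t) ^ e = v + 1`, while `(1 + t) ^ e ≤ 1`
    set x := (v + 1) ^ e⁻¹
    have hx0 : 0 < x := by positivity
    have hx1 : x ≤ 1 := Real.rpow_le_one_of_one_le_of_nonpos (by linarith) (inv_lt_zero.mpr he).le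
    have hxe : x ^ e = v + 1 := by
      rw [← Real.rpow_mul (by linarith), inv_mul_cancel₀ he.ne, Real.rpow_one]
    have h2x : (1 + (1 - x)) ^ e ≤ 1 := Real.rpow_le_one_of_one_le_of_nonpos (by linarith) he.le
    refine ⟨1 - x, ⟨by linarith, by linarith⟩, by linarith, ?_⟩
    rw [sub_sub_cancel, hxe]
    linarith

lemma hfun_surjOn {p : ℝ} (hp : 2 ≤ p) : SurjOn (hfun p) (hDomain p) univ := by
  have nonneg : ∀ v, 0 ≤ v → v ∈ hfun p '' hDomain p := by
    intro v hv
    obtain ⟨t, ht, ht0, hvt⟩ := exists_le_hfun hp hv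
    have hsub : Icc 0 t ⊆ hDomain p := Set.Icc_subset _ (zero_mem_hDomain p) ht
    obtain ⟨s, hs, hsv⟩ :=
      intermediate_value_Icc ht0 ((hfun_continuousOn p).mono hsub) ⟨(hfun_zero p).le.trans hv, hvt⟩
    exact ⟨s, hsub hs, hsv⟩
  intro v _
  rcases le_total 0 v with hv | hv
  · exact nonneg v hv
  · obtain ⟨t, ht, htv⟩ := nonneg (-v) (neg_nonneg.mpr hv)
    exact ⟨-t, neg_mem_hDomain ht, by rw [hfun_neg, htv, neg_neg]⟩

section Inverse

variable {p : ℝ} (hp : 2 ≤ p)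
include hp

lemma hfun_hInv (v : ℝ) : hfun p (hInv p v) = v :=
  Function.invFunOn_eq (hfun_surjOn hp (mem_univ v))

lemma hInv_mem_hDomain (v : ℝ) : hInv p v ∈ hDomain p :=
  Function.invFunOn_mem (hfun_surjOn hp (mem_univ v))

lemma hInv_hfun {t : ℝ} (ht : t ∈ hDomain p) : hInv p (hfun p t) = t :=
  (hfun_strictMonoOn hp).injOn.leftInvOn_invFunOn ht

lemma hInv_strictMono : StrictMono (hInv p) := by
  intro v w hvw
  by_contra! hle
  have := (hfun_strictMonoOn hp).monotoneOn (hInv_mem_hDomain hp w) (hInv_mem_hDomain hp v) hle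
  rw [hfun_hInv hp, hfun_hInv hp] at this
  linarith

lemma hInv_zero : hInv p 0 = 0 := by
  simpa only [hfun_zero] using hInv_hfun hp (zero_mem_hDomain p)

lemma hInv_neg (v : ℝ) : hInv p (-v) = -hInv p v := by
  rw [← hInv_hfun hp (neg_mem_hDomain (hInv_mem_hDomain hp v)), hfun_neg, hfun_hInv hp]

end Inverse

section Primitive

variable {g : ℝ → ℝ}

lemma integral_add_integral_le_integral_add (hg : Monotone g) {a b : ℝ} (ha : 0 ≤ a) (hb : 0 ≤ b) :
    (∫ v in (0 : ℝ)..a, g v) + ∫ v in (0 : ℝ)..b, g v ≤ ∫ v in (0 : ℝ)..a + b, g v := by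
  have hsplit : (∫ v in (0 : ℝ)..a + b, g v) - ∫ v in (0 : ℝ)..a, g v = ∫ v in a..a + b, g v :=
    intervalIntegral.integral_interval_sub_left hg.intervalIntegrable hg.intervalIntegrable
  have hshift : ∫ v in (0 : ℝ)..b, g (v + a) = ∫ v in a..a + b, g v := by simp [add_comm]
  have hmono : ∫ v in (0 : ℝ)..b, g v ≤ ∫ v in (0 : ℝ)..b, g (v + a) :=
    intervalIntegral.integral_mono_on hb hg.intervalIntegrable
      (show Monotone fun v => g (v + a) from fun _ _ h => hg (by linarith)).intervalIntegrable
      fun v _ => hg (by linarith)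
  linarith

lemma strictMonoOn_integral (hg : StrictMono g) (hg0 : g 0 = 0) :
    StrictMonoOn (fun u => ∫ v in (0 : ℝ)..u, g v) (Ici 0) := by
  intro a ha b _ hab
  have hpos : 0 < ∫ v in a..b, g v :=
    intervalIntegral.intervalIntegral_pos_of_pos_on hg.monotone.intervalIntegrable
      (fun v hv => hg0 ▸ hg (lt_of_le_of_lt ha hv.1)) hab
  rw [← intervalIntegral.integral_interval_sub_left hg.monotone.intervalIntegrable
    hg.monotone.intervalIntegrable] at hpos
  exact sub_pos.mp hpos

lemma integral_neg_eq_of_odd (hg : ∀ v, g (-v) = -g v) (u : ℝ) :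
    ∫ v in (0 : ℝ)..-u, g v = ∫ v in (0 : ℝ)..u, g v := by
  have := intervalIntegral.integral_comp_neg (a := 0) (b := u) g
  simp only [hg, intervalIntegral.integral_neg, neg_zero] at this
  rw [intervalIntegral.integral_symm, ← this, neg_neg]

end Primitive

section Qfun

variable {p : ℝ} (hp : 2 ≤ p)
include hp

lemma qfun_strictMonoOn : StrictMonoOn (qfun p) (Ici 0) :=
  strictMonoOn_integral (hInv_strictMono hp) (hInv_zero hp)

lemma qfun_abs (u : ℝ) : qfun p |u| = qfun p u := by
  rcases abs_choice u with h | h <;> rw [h]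
  exact integral_neg_eq_of_odd (hInv_neg hp) u

lemma qfun_nonneg (u : ℝ) : 0 ≤ qfun p u := by
  rw [← qfun_abs hp]
  simpa [qfun] using (qfun_strictMonoOn hp).monotoneOn self_mem_Ici (abs_nonneg u) (abs_nonneg u)

lemma sum_qfun_le_qfun_sum {ι : Type*} (s : Finset ι) {f : ι → ℝ} (hf : ∀ i ∈ s, 0 ≤ f i) :
    ∑ i ∈ s, qfun p (f i) ≤ qfun p (∑ i ∈ s, f i) := by
  have := Finset.le_sum_of_subadditive_on_pred (fun u => -qfun p u) (0 ≤ ·) (by simp [qfun])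
    (fun a b ha hb => by
      have := integral_add_integral_le_integral_add (hInv_strictMono hp).monotone ha hb
      simp only [qfun] at *; linarith)
    (fun a b ha hb => add_nonneg ha hb) f hf
  simpa [Finset.sum_neg_distrib] using this

end Qfun

lemma norm1_nonneg {n : ℕ} (v : Fin n → ℝ) : 0 ≤ norm1 v :=
  Finset.sum_nonneg fun i _ => abs_nonneg (v i)

lemma abs_le_norm1_of_Qfun_le {n : ℕ} {p α : ℝ} (hp : 2 ≤ p) (hα : 0 < α) {z w : Fin n → ℝ}
    (hzw : Qfun p α z ≤ Qfun p α w) (i : Fin n) : |z i| ≤ norm1 w := by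
  set β := α ^ p
  have hβ : 0 < β := Real.rpow_pos_of_pos hα p
  have qfun_div_abs : ∀ x, qfun p (|x| / β) = qfun p (x / β) := fun x => by
    rw [← qfun_abs hp (x / β), abs_div, abs_of_pos hβ]
  have hsum : ∑ j, qfun p (z j / β) ≤ ∑ j, qfun p (w j / β) :=
    le_of_mul_le_mul_left hzw hβ
  have key : qfun p (|z i| / β) ≤ qfun p (norm1 w / β) :=
    calc qfun p (|z i| / β) = qfun p (z i / β) := qfun_div_abs _
      _ ≤ ∑ j, qfun p (z j / β) :=
        Finset.single_le_sum (fun j _ => qfun_nonneg hp (z j / β)) (Finset.mem_univ i)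
      _ ≤ ∑ j, qfun p (|w j| / β) := by simpa only [qfun_div_abs] using hsum
      _ ≤ qfun p (∑ j, |w j| / β) :=
        sum_qfun_le_qfun_sum hp _ fun j _ => by positivity
      _ = qfun p (norm1 w / β) := by rw [← Finset.sum_div, norm1]
  have := (qfun_strictMonoOn hp).le_iff_le (by positivity : 0 ≤ |z i| / β)
    (div_nonneg (norm1_nonneg w) hβ.le)
  exact (div_le_div_iff_of_pos_right hβ).mp (this.mp key)

lemma normInf_le_norm1_of_Qfun_le {n : ℕ} {p α : ℝ} (hp : 2 ≤ p) (hα : 0 < α)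
    {z w : Fin n → ℝ} (hzw : Qfun p α z ≤ Qfun p α w) : normInf z ≤ norm1 w :=
  Real.iSup_le (abs_le_norm1_of_Qfun_le hp hα hzw) (norm1_nonneg w)

section Norm2

variable {n : ℕ}

lemma norm2_eq_norm (v : Fin n → ℝ) : norm2 v = ‖WithLp.toLp 2 v‖ := by
  simp [norm2, EuclideanSpace.norm_eq]

lemma norm2_nonneg (v : Fin n → ℝ) : 0 ≤ norm2 v := Real.sqrt_nonneg _

lemma norm2_pos {v : Fin n → ℝ} (hv : v ≠ 0) : 0 < norm2 v := by
  rw [norm2_eq_norm, norm_pos_iff]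
  exact fun h => hv (congrArg WithLp.ofLp h)

lemma norm2_smul (c : ℝ) (v : Fin n → ℝ) : norm2 (c • v) = |c| * norm2 v := by
  rw [norm2_eq_norm, norm2_eq_norm, WithLp.toLp_smul, norm_smul, Real.norm_eq_abs]

lemma norm2_sq (v : Fin n → ℝ) : norm2 v ^ 2 = v ⬝ᵥ v := by
  rw [norm2, Real.sq_sqrt (Finset.sum_nonneg fun i _ => sq_nonneg (v i))]
  simp [dotProduct, sq]

lemma dotProduct_le_norm2_mul_norm2 (v w : Fin n → ℝ) : v ⬝ᵥ w ≤ norm2 v * norm2 w :=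
  Real.sum_mul_le_sqrt_mul_sqrt _ v w

lemma norm1_le_sqrt_mul_norm2 (v : Fin n → ℝ) : norm1 v ≤ Real.sqrt n * norm2 v := by
  simpa [norm1, norm2] using Real.sum_mul_le_sqrt_mul_sqrt Finset.univ (fun _ => 1) (|v ·|)

end Norm2

section Rank

variable {K : Type*} [Field K] {n k : ℕ}

lemma Matrix.mulVec_surjective_of_rank_eq {B : Matrix (Fin n) (Fin k) K} (hB : B.rank = n) :
    Function.Surjective B.mulVec := by
  rw [← Matrix.coe_mulVecLin, ← LinearMap.range_eq_top]
  exact Submodule.eq_top_of_finrank_eq (by rw [Module.finrank_fin_fun]; exact hB)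

lemma Matrix.mulVec_injective_of_rank_eq {B : Matrix (Fin n) (Fin k) K} (hB : B.rank = k) :
    Function.Injective B.mulVec := by
  rw [Matrix.mulVec_injective_iff, linearIndependent_iff_card_eq_finrank_span, Fintype.card_fin]
  exact hB.symm.trans B.rank_eq_finrank_span_cols

end Rank

section SigmaMin

variable {m N : ℕ} (A : Matrix (Fin m) (Fin N) ℝ)

lemma sigmaMin_mul_norm2_le (w : Fin m → ℝ) : sigmaMin A * norm2 w ≤ norm2 (Aᵀ *ᵥ w) := by
  rcases eq_or_ne w 0 with rfl | hw
  · simp [norm2]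
  have hpos := norm2_pos hw
  have hunit : norm2 ((norm2 w)⁻¹ • w) = 1 := by
    rw [norm2_smul, abs_of_pos (inv_pos.mpr hpos), inv_mul_cancel₀ hpos.ne']
  have hle : sigmaMin A ≤ norm2 (Aᵀ *ᵥ ((norm2 w)⁻¹ • w)) :=
    csInf_le ⟨0, fun c ⟨_, _, hc⟩ => hc ▸ norm2_nonneg _⟩ ⟨_, hunit, rfl⟩
  rw [Matrix.mulVec_smul, norm2_smul, abs_of_pos (inv_pos.mpr hpos)] at hle
  rwa [← le_div_iff₀ hpos, div_eq_inv_mul]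

lemma sigmaMin_pos (hm : 0 < m) (hA : A.rank = m) : 0 < sigmaMin A := by
  have : Nonempty (Fin m) := Fin.pos_iff_nonempty.mp hm
  set f := fun x : EuclideanSpace ℝ (Fin m) => norm2 (Aᵀ *ᵥ x.ofLp)
  have hsigma : sigmaMin A = sInf (f '' Metric.sphere 0 1) := by
    unfold sigmaMin
    congr 1
    ext c
    constructor
    · rintro ⟨z, hz, rfl⟩
      exact ⟨WithLp.toLp 2 z, by simpa [norm2_eq_norm] using hz, rfl⟩
    · rintro ⟨x, hx, rfl⟩
      exact ⟨x.ofLp, by simpa [norm2_eq_norm] using hx, rfl⟩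
  have hf : Continuous f := by
    simp only [f, norm2]
    fun_prop
  obtain ⟨x, hx, hfx⟩ := ((isCompact_sphere 0 1).image hf).sInf_mem
    ((NormedSpace.sphere_nonempty.mpr zero_le_one).image f)
  rw [hsigma, ← hfx]
  refine norm2_pos fun h => ne_zero_of_mem_unit_sphere ⟨x, hx⟩ ?_
  have := Matrix.mulVec_injective_of_rank_eq ((Matrix.rank_transpose A).trans hA)
    (h.trans (Matrix.mulVec_zero Aᵀ).symm)
  simpa using congrArg (WithLp.toLp 2) this

end SigmaMin

section LeastNorm

variable {m N : ℕ} {A : Matrix (Fin m) (Fin N) ℝ} {y : Fin m → ℝ}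

lemma norm2_transpose_mulVec_le {w : Fin m → ℝ} (hσ : 0 < sigmaMin A) (hw : A *ᵥ (Aᵀ *ᵥ w) = y) :
    norm2 (Aᵀ *ᵥ w) ≤ norm2 y / sigmaMin A := by
  set z := Aᵀ *ᵥ w
  have hz : norm2 z ^ 2 = w ⬝ᵥ y := by
    rw [norm2_sq, ← hw, Matrix.dotProduct_mulVec w A z, ← Matrix.mulVec_transpose]
  have key : norm2 z * (sigmaMin A * norm2 z) ≤ norm2 z * norm2 y :=
    calc norm2 z * (sigmaMin A * norm2 z) = sigmaMin A * (w ⬝ᵥ y) := by rw [← hz]; ring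
      _ ≤ sigmaMin A * (norm2 w * norm2 y) :=
        mul_le_mul_of_nonneg_left (dotProduct_le_norm2_mul_norm2 w y) hσ.le
      _ ≤ norm2 z * norm2 y := by
        rw [← mul_assoc]
        exact mul_le_mul_of_nonneg_right (sigmaMin_mul_norm2_le A w) (norm2_nonneg y)
  rw [le_div_iff₀ hσ, mul_comm]
  rcases (norm2_nonneg z).eq_or_lt with h0 | hpos
  · rw [← h0, mul_zero]
    exact norm2_nonneg y
  · exact le_of_mul_le_mul_left key hpos

lemma norm1_le_of_mem_BPset (hm : 0 < m) (hA : A.rank = m) {x : Fin N → ℝ} (hx : x ∈ BPset A y) :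
    norm1 x ≤ Real.sqrt N / sigmaMin A * norm2 y := by
  obtain ⟨w, hw⟩ := Matrix.mulVec_surjective_of_rank_eq
    ((Matrix.rank_self_mul_transpose A).trans hA) y
  rw [← Matrix.mulVec_mulVec] at hw
  calc norm1 x ≤ norm1 (Aᵀ *ᵥ w) := hx.2 _ hw
    _ ≤ Real.sqrt N * norm2 (Aᵀ *ᵥ w) := norm1_le_sqrt_mul_norm2 _
    _ ≤ Real.sqrt N * (norm2 y / sigmaMin A) :=
      mul_le_mul_of_nonneg_left (norm2_transpose_mulVec_le (sigmaMin_pos A hm hA) hw)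
        (Real.sqrt_nonneg N)
    _ = Real.sqrt N / sigmaMin A * norm2 y := by ring

end LeastNorm

theorem stmt10_general (m N : ℕ) (hm : 1 ≤ m)
    (A : Matrix (Fin m) (Fin N) ℝ) (hA : A.rank = m)
    (y : Fin m → ℝ) (p : ℝ) (hp : 2 ≤ p) (α : ℝ) (hα : 0 < α)
    (qstar mstar : Fin N → ℝ)
    (hq2 : ∀ z : Fin N → ℝ, A.mulVec z = y → Qfun p α qstar ≤ Qfun p α z)
    (hm1 : mstar ∈ BPset A y) :
    normInf qstar ≤ norm1 mstar ∧
    norm1 mstar ≤ Real.sqrt N / sigmaMin A * norm2 y :=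
  ⟨normInf_le_norm1_of_Qfun_le hp hα (hq2 mstar hm1.1), norm1_le_of_mem_BPset hm hA hm1⟩

/-- Lemma `q_infty_bound`: ‖q*‖_∞ ≤ ‖m*‖₁ ≤ (√N/σ_min(A))‖y‖₂,
where q* is the minimizer of Q_p over {z : Az = y} and m* the minimizer of Q_p over
𝒰(A,y). -/
theorem stmt10 (m N : ℕ) (hm : 1 ≤ m) (hmN : m < N)
    (A : Matrix (Fin m) (Fin N) ℝ) (hA : A.rank = m)
    (y : Fin m → ℝ) (p : ℝ) (hp : 2 ≤ p) (α : ℝ) (hα : 0 < α)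
    (qstar mstar : Fin N → ℝ)
    (hq1 : A.mulVec qstar = y)
    (hq2 : ∀ z : Fin N → ℝ, A.mulVec z = y → Qfun p α qstar ≤ Qfun p α z)
    (hm1 : mstar ∈ BPset A y)
    (hm2 : ∀ z ∈ BPset A y, Qfun p α mstar ≤ Qfun p α z) :
    normInf qstar ≤ norm1 mstar ∧
    norm1 mstar ≤ Real.sqrt N / sigmaMin A * norm2 y :=
  stmt10_general m N hm A hA y p hp α hα qstar mstar hq2 hm1
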